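/- Let L̂ be the degree-completion of the free Lie algebra on two generators x and y over ℚ (elements are formal series ∑_{n≥1} zₙ with zₙ of bracket-weight n). If z, z' ∈ L̂ both satisfy exp(ad_z) = exp(ad_x)∘exp(ad_y) and exp(ad_{z'}) = exp(ad_x)∘exp(ad_y) as linear endomorphisms of L̂, then z = z'. That is, there is at most one element of L̂ whose exponentiated adjoint action equals exp(ad_x)exp(ad_y). -/

import Mathlib

/-- Truncated exponential of the adjoint action `exp(ad_a)(u)` up to order `n`,
in the free Lie algebra on two generators over `ℚ`. Modulo the `n`-th step of the
lower central series (= weight) filtration this computes the honest exponential,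
since `ad` raises the filtration. -/
noncomputable def truncExpAd (a u : FreeLieAlgebra ℚ (Fin 2)) (n : ℕ) :
    FreeLieAlgebra ℚ (Fin 2) :=
  ∑ j ∈ Finset.range (n + 1), ((j.factorial : ℚ)⁻¹) •
    ((LieAlgebra.ad ℚ (FreeLieAlgebra ℚ (Fin 2)) a ^ j) u)

/-- The weight (lower central series) filtration on the free Lie algebra on two
generators over `ℚ`; its inverse limit is the degree completion `L̂`. -/
noncomputable def lcsF (n : ℕ) : Submodule ℚ (FreeLieAlgebra ℚ (Fin 2)) :=
  (LieModule.lowerCentralSeries ℚ (FreeLieAlgebra ℚ (Fin 2)) (FreeLieAlgebra ℚ (Fin 2)) n).toSubmodule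

/-!
Write `γ n` for the `n`-th term of the lower central series of the free Lie algebra `L`, spanned
by the brackets of at least `n + 1` generators. By induction and coherence,
`d = z (n + 2) - z' (n + 2)` lies in `γ n`, and comparing the two truncated exponentials at a
generator `x`, whose terms of degree `≥ 2` in `ad` already lie in `γ (n + 2)`, gives
`⁅d, x⁆ ∈ γ (n + 2)`. The heart of the proof is that this forces `d ∈ γ (n + 1)`.

For that, write `d = h + r` with `h` a combination of brackets of exactly `n + 1` generators and
`r ∈ γ (n + 1)`, and map to the free associative algebra. There
`toMonoidAlgebra ⁅h, x⁆ = toMonoidAlgebra h * x - x * toMonoidAlgebra h` is homogeneous of degree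
`n + 2` with no terms of degree below `n + 3`, hence zero; so `toMonoidAlgebra h` commutes with both
letters and, having no constant term, vanishes. The Dynkin–Specht–Wever identity
`dynkin (toMonoidAlgebra h) = (n + 1) • h`, where `dynkin` sends a word to its right-normed
bracket, then gives `h = 0`.
-/

open LieModule LieAlgebra
open scoped Pointwise

section LowerCentralSeries

variable {R L : Type*} [CommRing R] [LieRing L] [LieAlgebra R L]

theorem lie_mem_lowerCentralSeries_succ (u : L) {n : ℕ} {a : L}
    (ha : a ∈ lowerCentralSeries R L L n) : ⁅u, a⁆ ∈ lowerCentralSeries R L L (n + 1) := by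
  rw [lowerCentralSeries_succ]
  exact LieSubmodule.lie_mem_lie (LieSubmodule.mem_top u) ha

theorem lie_mem_lowerCentralSeries_succ_left {n : ℕ} {a : L}
    (ha : a ∈ lowerCentralSeries R L L n) (u : L) :
    ⁅a, u⁆ ∈ lowerCentralSeries R L L (n + 1) := by
  rw [← lie_skew]
  exact neg_mem (lie_mem_lowerCentralSeries_succ u ha)

theorem toSubmodule_lowerCentralSeries_succ_le {n : ℕ} {N : Submodule R L}
    (h : ∀ u a : L, a ∈ lowerCentralSeries R L L n → ⁅u, a⁆ ∈ N) :
    (lowerCentralSeries R L L (n + 1)).toSubmodule ≤ N := by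
  rw [lowerCentralSeries_succ, LieSubmodule.lieIdeal_oper_eq_linear_span', Submodule.span_le]
  rintro _ ⟨u, -, a, ha, rfl⟩
  exact h u a ha

theorem lie_mem_lowerCentralSeries_add {j k : ℕ} {a b : L}
    (ha : a ∈ lowerCentralSeries R L L j) (hb : b ∈ lowerCentralSeries R L L k) :
    ⁅a, b⁆ ∈ lowerCentralSeries R L L (j + k + 1) := by
  induction k generalizing j a b with
  | zero => exact lie_mem_lowerCentralSeries_succ_left ha b
  | succ k ih =>
    suffices (lowerCentralSeries R L L (k + 1)).toSubmodule ≤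
        (lowerCentralSeries R L L (j + (k + 1) + 1)).toSubmodule.comap (ad R L a) from this hb
    refine toSubmodule_lowerCentralSeries_succ_le fun u v hv => ?_
    rw [Submodule.mem_comap, ad_apply, leibniz_lie]
    refine add_mem ?_ (lie_mem_lowerCentralSeries_succ u (ih ha hv))
    have h := ih (lie_mem_lowerCentralSeries_succ_left ha u) hv
    rwa [Nat.add_right_comm j 1 k] at h

theorem ad_pow_apply_mem_lowerCentralSeries (a u : L) (j : ℕ) :
    (ad R L a ^ j) u ∈ lowerCentralSeries R L L j := by
  induction j with
  | zero => exact LieSubmodule.mem_top u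
  | succ j ih =>
    rw [pow_succ', Module.End.mul_apply, ad_apply]
    exact lie_mem_lowerCentralSeries_succ a ih

theorem ad_pow_apply_sub_ad_pow_apply_mem {n : ℕ} {a a' : L}
    (ha : a - a' ∈ lowerCentralSeries R L L n) (u : L) (j : ℕ) :
    (ad R L a ^ j) u - (ad R L a' ^ j) u ∈ lowerCentralSeries R L L (n + j) := by
  induction j with
  | zero => simp
  | succ j ih =>
    have hsplit : (ad R L a ^ (j + 1)) u - (ad R L a' ^ (j + 1)) u =
        ⁅a, (ad R L a ^ j) u - (ad R L a' ^ j) u⁆ + ⁅a - a', (ad R L a' ^ j) u⁆ := by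
      simp only [pow_succ', Module.End.mul_apply, ad_apply, lie_sub, sub_lie]
      abel
    rw [hsplit, ← add_assoc]
    exact add_mem (lie_mem_lowerCentralSeries_succ a ih)
      (lie_mem_lowerCentralSeries_add ha (ad_pow_apply_mem_lowerCentralSeries a' u j))

end LowerCentralSeries

theorem MonoidAlgebra.mul_mem_supported {R M : Type*} [Semiring R] [Mul M] {s t : Set M}
    {x y : MonoidAlgebra R M} (hx : x ∈ supported R R s) (hy : y ∈ supported R R t) :
    x * y ∈ supported R R (s * t) := by
  classical
  rw [mem_supported] at hx hy ⊢
  calc ((x * y).coeff.support : Set M) ⊆ ↑(x.coeff.support * y.coeff.support) :=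
        Finset.coe_subset.mpr (support_coeff_mul_subset x y)
    _ ⊆ s * t := by rw [Finset.coe_mul]; exact Set.mul_subset_mul hx hy

namespace FreeMonoid

open MonoidAlgebra (single)

variable (R X : Type*) [Semiring R]

noncomputable def lengthFiltration (m : ℕ) : Submodule R (MonoidAlgebra R (FreeMonoid X)) :=
  MonoidAlgebra.supported R R {w | m ≤ w.length}

noncomputable def lengthGrade (m : ℕ) : Submodule R (MonoidAlgebra R (FreeMonoid X)) :=
  MonoidAlgebra.supported R R {w | w.length = m}

variable {R X}

theorem mem_lengthFiltration {m : ℕ} {t : MonoidAlgebra R (FreeMonoid X)} :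
    t ∈ lengthFiltration R X m ↔ ∀ w : FreeMonoid X, w.length < m → t.coeff w = 0 := by
  simp [lengthFiltration, MonoidAlgebra.mem_supported']

theorem mem_lengthGrade {m : ℕ} {t : MonoidAlgebra R (FreeMonoid X)} :
    t ∈ lengthGrade R X m ↔ ∀ w : FreeMonoid X, w.length ≠ m → t.coeff w = 0 := by
  simp [lengthGrade, MonoidAlgebra.mem_supported']

theorem lengthFiltration_antitone : Antitone (lengthFiltration R X) :=
  fun _ _ h => MonoidAlgebra.supported_mono fun _ hw => le_trans h hw

theorem lengthGrade_le_lengthFiltration (m : ℕ) : lengthGrade R X m ≤ lengthFiltration R X m :=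
  MonoidAlgebra.supported_mono fun _ hw => hw.ge

theorem mul_mem_lengthFiltration {j k : ℕ} {s t : MonoidAlgebra R (FreeMonoid X)}
    (hs : s ∈ lengthFiltration R X j) (ht : t ∈ lengthFiltration R X k) :
    s * t ∈ lengthFiltration R X (j + k) := by
  refine MonoidAlgebra.supported_mono ?_ (MonoidAlgebra.mul_mem_supported hs ht)
  rintro _ ⟨u, hu, v, hv, rfl⟩
  simp only [Set.mem_ofPred_eq, length_mul] at hu hv ⊢
  omega

theorem mul_mem_lengthGrade {j k : ℕ} {s t : MonoidAlgebra R (FreeMonoid X)}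
    (hs : s ∈ lengthGrade R X j) (ht : t ∈ lengthGrade R X k) :
    s * t ∈ lengthGrade R X (j + k) := by
  refine MonoidAlgebra.supported_mono ?_ (MonoidAlgebra.mul_mem_supported hs ht)
  rintro _ ⟨u, hu, v, hv, rfl⟩
  simp only [Set.mem_ofPred_eq, length_mul] at hu hv ⊢
  omega

theorem single_of_mem_lengthGrade_one (x : X) : single (of x) (1 : R) ∈ lengthGrade R X 1 := by
  classical
  rw [mem_lengthGrade]
  intro w hw
  rw [MonoidAlgebra.coeff_single, Finsupp.single_apply, if_neg]
  rintro rfl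
  exact hw (length_of x)

theorem eq_zero_of_mem_lengthGrade_of_mem_lengthFiltration {k : ℕ}
    {t : MonoidAlgebra R (FreeMonoid X)}
    (hgrade : t ∈ lengthGrade R X k) (hfilt : t ∈ lengthFiltration R X (k + 1)) : t = 0 := by
  ext w
  by_cases hw : w.length = k
  · exact mem_lengthFiltration.mp hfilt w (by omega)
  · exact mem_lengthGrade.mp hgrade w hw

theorem coeff_eq_zero_of_forall_commute [Nontrivial X] {t : MonoidAlgebra R (FreeMonoid X)}
    (ht : ∀ x, Commute t (single (of x) 1)) {w : FreeMonoid X} (hw : w ≠ 1) :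
    t.coeff w = 0 := by
  induction w using FreeMonoid.casesOn with
  | one => exact absurd rfl hw
  | of_mul y w =>
    obtain ⟨x, hxy⟩ := exists_ne y
    have hfirst : ∀ d, of x * d ≠ of y * w * of x := fun d h =>
      hxy (List.cons_eq_cons.mp (congrArg toList h)).1
    calc t.coeff (of y * w) = (t * single (of x) 1).coeff (of y * w * of x) := by
          rw [MonoidAlgebra.coeff_mul_single_mul, mul_one]
      _ = (single (of x) 1 * t).coeff (of y * w * of x) := by rw [(ht x).eq]
      _ = 0 := MonoidAlgebra.coeff_single_mul_of_forall_mul_ne _ _ hfirst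

end FreeMonoid

namespace FreeLieAlgebra

open MonoidAlgebra (single)
open FreeMonoid (lengthFiltration lengthGrade mem_lengthFiltration mem_lengthGrade
  lengthFiltration_antitone mul_mem_lengthFiltration)

variable {R X : Type*}

local notation "γ" => lowerCentralSeries R (FreeLieAlgebra R X) (FreeLieAlgebra R X)

attribute [local instance] LieRing.ofAssociativeRing

section CommRing

variable [CommRing R]

theorem induction_on {p : FreeLieAlgebra R X → Prop} (a : FreeLieAlgebra R X)
    (zero : p 0) (of : ∀ x, p (FreeLieAlgebra.of R x)) (add : ∀ a b, p a → p b → p (a + b))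
    (smul : ∀ (c : R) a, p a → p (c • a)) (lie : ∀ a b, p a → p b → p ⁅a, b⁆) : p a := by
  let S : LieSubalgebra R (FreeLieAlgebra R X) :=
    { carrier := {a | p a}
      add_mem' := add _ _
      zero_mem' := zero
      smul_mem' := smul
      lie_mem' := lie _ _ }
  let f := lift R fun x => (⟨FreeLieAlgebra.of R x, of x⟩ : S)
  have hf : S.incl.comp f = LieHom.id := hom_ext fun x => by simp [f]
  have hfa : (f a : FreeLieAlgebra R X) = a := LieHom.congr_fun hf a
  exact hfa ▸ (f a).2

noncomputable def toMonoidAlgebra : FreeLieAlgebra R X →ₗ⁅R⁆ MonoidAlgebra R (FreeMonoid X) :=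
  lift R fun x => single (FreeMonoid.of x) 1

theorem toMonoidAlgebra_of (x : X) :
    toMonoidAlgebra (of R x) = single (FreeMonoid.of x) 1 :=
  lift_of_apply _ _

theorem toMonoidAlgebra_lie (a b : FreeLieAlgebra R X) :
    toMonoidAlgebra ⁅a, b⁆ =
      toMonoidAlgebra a * toMonoidAlgebra b - toMonoidAlgebra b * toMonoidAlgebra a :=
  LieHom.map_lie _ _ _

theorem toMonoidAlgebra_lie_mem_lengthFiltration {j k : ℕ} {a b : FreeLieAlgebra R X}
    (ha : toMonoidAlgebra a ∈ lengthFiltration R X j)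
    (hb : toMonoidAlgebra b ∈ lengthFiltration R X k) :
    toMonoidAlgebra ⁅a, b⁆ ∈ lengthFiltration R X (j + k) := by
  rw [toMonoidAlgebra_lie]
  exact sub_mem (mul_mem_lengthFiltration ha hb) (add_comm k j ▸ mul_mem_lengthFiltration hb ha)

theorem toMonoidAlgebra_mem_lengthFiltration_one (a : FreeLieAlgebra R X) :
    toMonoidAlgebra a ∈ lengthFiltration R X 1 := by
  induction a using induction_on with
  | zero => simp
  | of x =>
    rw [toMonoidAlgebra_of]
    exact FreeMonoid.lengthGrade_le_lengthFiltration 1 (FreeMonoid.single_of_mem_lengthGrade_one x)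
  | add a b ha hb => rw [map_add]; exact add_mem ha hb
  | smul c a ha => rw [map_smul]; exact Submodule.smul_mem _ c ha
  | lie a b ha hb =>
    exact lengthFiltration_antitone (by omega) (toMonoidAlgebra_lie_mem_lengthFiltration ha hb)

theorem toMonoidAlgebra_mem_lengthFiltration {m : ℕ} {a : FreeLieAlgebra R X} (ha : a ∈ γ m) :
    toMonoidAlgebra a ∈ lengthFiltration R X (m + 1) := by
  induction m generalizing a with
  | zero => exact toMonoidAlgebra_mem_lengthFiltration_one a
  | succ m ih =>
    suffices (γ (m + 1)).toSubmodule ≤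
        (lengthFiltration R X (m + 2)).comap toMonoidAlgebra.toLinearMap from this ha
    refine toSubmodule_lowerCentralSeries_succ_le fun u v hv => ?_
    exact add_comm 1 (m + 1) ▸
      toMonoidAlgebra_lie_mem_lengthFiltration (toMonoidAlgebra_mem_lengthFiltration_one u) (ih hv)

theorem coeff_one_toMonoidAlgebra (a : FreeLieAlgebra R X) : (toMonoidAlgebra a).coeff 1 = 0 :=
  mem_lengthFiltration.mp (toMonoidAlgebra_mem_lengthFiltration_one a) 1 (by simp)

theorem coeff_one_toMonoidAlgebra_mul (a : FreeLieAlgebra R X)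
    (t : MonoidAlgebra R (FreeMonoid X)) : (toMonoidAlgebra a * t).coeff 1 = 0 := by
  have ht : t ∈ lengthFiltration R X 0 := mem_lengthFiltration.mpr (by simp)
  exact mem_lengthFiltration.mp
    (mul_mem_lengthFiltration (toMonoidAlgebra_mem_lengthFiltration_one a) ht) 1 (by simp)

variable (R) in
noncomputable def lieWord : List X → FreeLieAlgebra R X
  | [] => 0
  | [x] => of R x
  | x :: y :: w => ⁅of R x, lieWord (y :: w)⁆

theorem lieWord_cons (x : X) {w : List X} (hw : w ≠ []) :
    lieWord R (x :: w) = ⁅of R x, lieWord R w⁆ := by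
  cases w with
  | nil => exact absurd rfl hw
  | cons y w => rfl

noncomputable def dynkin : MonoidAlgebra R (FreeMonoid X) →ₗ[R] FreeLieAlgebra R X :=
  Finsupp.linearCombination R (fun w : FreeMonoid X => lieWord R w.toList) ∘ₗ
    (MonoidAlgebra.coeffLinearEquiv R).toLinearMap

theorem dynkin_single (w : FreeMonoid X) (c : R) : dynkin (single w c) = c • lieWord R w.toList :=
  Finsupp.linearCombination_single _ _ _

theorem dynkin_toMonoidAlgebra_mul (a : FreeLieAlgebra R X)
    (t : MonoidAlgebra R (FreeMonoid X)) :
    dynkin (toMonoidAlgebra a * t) = ⁅a, dynkin t⁆ + t.coeff 1 • dynkin (toMonoidAlgebra a) := by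
  induction a using induction_on generalizing t with
  | zero => simp
  | of x =>
    induction t using MonoidAlgebra.induction_linear with
    | zero => simp
    | add s t hs ht =>
      simp only [mul_add, map_add, hs, ht, lie_add, MonoidAlgebra.coeff_add, Finsupp.add_apply,
        add_smul]
      abel
    | single w c =>
      classical
      rw [toMonoidAlgebra_of, MonoidAlgebra.single_mul_single, one_mul, dynkin_single,
        dynkin_single, dynkin_single, MonoidAlgebra.coeff_single, Finsupp.single_apply,
        FreeMonoid.toList_of_mul, FreeMonoid.toList_of]
      by_cases hw : w = 1
      · subst hw
        simp [lieWord]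
      · have hw' : w.toList ≠ [] := fun h => hw (FreeMonoid.toList.injective h)
        rw [lieWord_cons x hw', if_neg hw, zero_smul, add_zero, lie_smul]
  | add a b ha hb =>
    rw [map_add, add_mul, map_add, ha, hb, add_lie, map_add, smul_add]
    abel
  | smul c a ha =>
    rw [map_smul, smul_mul_assoc, map_smul, ha, smul_lie, map_smul, smul_add, smul_comm c]
  | lie a b ha hb =>
    have hlie : dynkin (toMonoidAlgebra ⁅a, b⁆) =
        ⁅a, dynkin (toMonoidAlgebra b)⁆ - ⁅b, dynkin (toMonoidAlgebra a)⁆ := by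
      rw [toMonoidAlgebra_lie, map_sub, ha, hb, coeff_one_toMonoidAlgebra,
        coeff_one_toMonoidAlgebra, zero_smul, zero_smul, add_zero, add_zero]
    rw [hlie, toMonoidAlgebra_lie, sub_mul, mul_assoc, mul_assoc, map_sub, ha (_ * t),
      hb (_ * t), coeff_one_toMonoidAlgebra_mul, coeff_one_toMonoidAlgebra_mul, ha t, hb t]
    simp only [zero_smul, add_zero, lie_add, lie_smul, smul_sub, lie_lie]
    abel

theorem dynkin_toMonoidAlgebra_lie (a b : FreeLieAlgebra R X) :
    dynkin (toMonoidAlgebra ⁅a, b⁆) =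
      ⁅dynkin (toMonoidAlgebra a), b⁆ + ⁅a, dynkin (toMonoidAlgebra b)⁆ := by
  rw [toMonoidAlgebra_lie, map_sub, dynkin_toMonoidAlgebra_mul, dynkin_toMonoidAlgebra_mul,
    coeff_one_toMonoidAlgebra, coeff_one_toMonoidAlgebra, zero_smul, zero_smul, add_zero,
    add_zero, ← lie_skew b]
  abel

inductive IsLieMonomial : ℕ → FreeLieAlgebra R X → Prop
  | of (x : X) : IsLieMonomial 1 (FreeLieAlgebra.of R x)
  | lie {j k : ℕ} {a b : FreeLieAlgebra R X} :
      IsLieMonomial j a → IsLieMonomial k b → IsLieMonomial (j + k) ⁅a, b⁆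

variable (R X) in
noncomputable def homogeneousSubmodule (k : ℕ) : Submodule R (FreeLieAlgebra R X) :=
  Submodule.span R {a | IsLieMonomial k a}

theorem lie_mem_homogeneousSubmodule {j k : ℕ} {a b : FreeLieAlgebra R X}
    (ha : a ∈ homogeneousSubmodule R X j) (hb : b ∈ homogeneousSubmodule R X k) :
    ⁅a, b⁆ ∈ homogeneousSubmodule R X (j + k) := by
  induction ha using Submodule.span_induction with
  | mem a ha =>
    induction hb using Submodule.span_induction with
    | mem b hb => exact Submodule.subset_span (IsLieMonomial.lie ha hb)
    | zero => simp
    | add b b' _ _ hb hb' => rw [lie_add]; exact add_mem hb hb'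
    | smul c b _ hb => rw [lie_smul]; exact Submodule.smul_mem _ c hb
  | zero => simp
  | add a a' _ _ ha ha' => rw [add_lie]; exact add_mem ha ha'
  | smul c a _ ha => rw [smul_lie]; exact Submodule.smul_mem _ c ha

theorem dynkin_toMonoidAlgebra_of_mem_homogeneousSubmodule {k : ℕ} {a : FreeLieAlgebra R X}
    (ha : a ∈ homogeneousSubmodule R X k) : dynkin (toMonoidAlgebra a) = (k : R) • a := by
  induction ha using Submodule.span_induction with
  | mem a ha =>
    induction ha with
    | of x => simp [toMonoidAlgebra_of, dynkin_single, lieWord]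
    | lie _ _ iha ihb =>
      rw [dynkin_toMonoidAlgebra_lie, iha, ihb, smul_lie, lie_smul, Nat.cast_add, add_smul]
  | zero => simp
  | add a b _ _ ha hb => rw [map_add, map_add, ha, hb, smul_add]
  | smul c a _ ha => rw [map_smul, map_smul, ha, smul_comm]

theorem toMonoidAlgebra_mem_lengthGrade {k : ℕ} {a : FreeLieAlgebra R X}
    (ha : a ∈ homogeneousSubmodule R X k) : toMonoidAlgebra a ∈ lengthGrade R X k := by
  induction ha using Submodule.span_induction with
  | mem a ha =>
    induction ha with
    | of x => rw [toMonoidAlgebra_of]; exact FreeMonoid.single_of_mem_lengthGrade_one x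
    | @lie j k _ _ _ _ iha ihb =>
      rw [toMonoidAlgebra_lie]
      exact sub_mem (FreeMonoid.mul_mem_lengthGrade iha ihb)
        (add_comm k j ▸ FreeMonoid.mul_mem_lengthGrade ihb iha)
  | zero => simp
  | add a b _ _ ha hb => rw [map_add]; exact add_mem ha hb
  | smul c a _ ha => rw [map_smul]; exact Submodule.smul_mem _ c ha

theorem mem_homogeneousSubmodule_one_sup (a : FreeLieAlgebra R X) :
    a ∈ homogeneousSubmodule R X 1 ⊔ (γ 1).toSubmodule := by
  induction a using induction_on with
  | zero => exact zero_mem _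
  | of x => exact Submodule.mem_sup_left (Submodule.subset_span (IsLieMonomial.of x))
  | add a b ha hb => exact add_mem ha hb
  | smul c a ha => exact Submodule.smul_mem _ c ha
  | lie a b _ _ =>
    exact Submodule.mem_sup_right (lie_mem_lowerCentralSeries_succ a (LieSubmodule.mem_top b))

theorem toSubmodule_lowerCentralSeries_le_homogeneousSubmodule_sup (n : ℕ) :
    (γ n).toSubmodule ≤ homogeneousSubmodule R X (n + 1) ⊔ (γ (n + 1)).toSubmodule := by
  induction n with
  | zero => exact fun a _ => mem_homogeneousSubmodule_one_sup a
  | succ n ih =>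
    refine toSubmodule_lowerCentralSeries_succ_le fun u v hv => ?_
    obtain ⟨hu, hhu, ru, hru, rfl⟩ := Submodule.mem_sup.mp (mem_homogeneousSubmodule_one_sup u)
    obtain ⟨hv', hhv, rv, hrv, rfl⟩ := Submodule.mem_sup.mp (ih hv)
    rw [add_lie, lie_add, add_assoc ⁅hu, hv'⁆]
    refine Submodule.add_mem_sup ?_ (add_mem (lie_mem_lowerCentralSeries_succ hu hrv) ?_)
    · exact add_comm 1 (n + 1) ▸ lie_mem_homogeneousSubmodule hhu hhv
    · exact (by omega : 1 + n + 1 = n + 1 + 1) ▸ lie_mem_lowerCentralSeries_add hru hv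

end CommRing

section CharZero

variable [Field R] [CharZero R]

theorem eq_zero_of_toMonoidAlgebra_eq_zero {k : ℕ} {a : FreeLieAlgebra R X}
    (ha : a ∈ homogeneousSubmodule R X (k + 1)) (h0 : toMonoidAlgebra a = 0) : a = 0 := by
  have h := dynkin_toMonoidAlgebra_of_mem_homogeneousSubmodule ha
  rw [h0, map_zero, eq_comm, smul_eq_zero] at h
  exact h.resolve_left (Nat.cast_ne_zero.mpr k.succ_ne_zero)

theorem mem_lowerCentralSeries_succ_of_forall_lie_of_mem [Nontrivial X] {n : ℕ}
    {d : FreeLieAlgebra R X} (hd : d ∈ γ n) (hlie : ∀ x, ⁅d, of R x⁆ ∈ γ (n + 2)) :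
    d ∈ γ (n + 1) := by
  obtain ⟨h, hh, r, hr, rfl⟩ :=
    Submodule.mem_sup.mp (toSubmodule_lowerCentralSeries_le_homogeneousSubmodule_sup n hd)
  have hcomm (x : X) : Commute (toMonoidAlgebra h) (single (FreeMonoid.of x) 1) := by
    have hlie_h : ⁅h, of R x⁆ ∈ γ (n + 2) := by
      have h' := sub_mem (hlie x) (lie_mem_lowerCentralSeries_succ_left hr (of R x))
      rwa [add_lie, add_sub_cancel_right] at h'
    have hzero := FreeMonoid.eq_zero_of_mem_lengthGrade_of_mem_lengthFiltration
      (toMonoidAlgebra_mem_lengthGrade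
        (lie_mem_homogeneousSubmodule hh (Submodule.subset_span (IsLieMonomial.of x))))
      (toMonoidAlgebra_mem_lengthFiltration hlie_h)
    rwa [toMonoidAlgebra_lie, toMonoidAlgebra_of, sub_eq_zero] at hzero
  have hτ : toMonoidAlgebra h = 0 := by
    ext w
    by_cases hw : w = 1
    · subst hw
      exact mem_lengthGrade.mp (toMonoidAlgebra_mem_lengthGrade hh) 1 (by simp)
    · exact FreeMonoid.coeff_eq_zero_of_forall_commute hcomm hw
  rw [eq_zero_of_toMonoidAlgebra_eq_zero hh hτ, zero_add]
  exact hr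

end CharZero

end FreeLieAlgebra

theorem truncExpAd_sub_truncExpAd_sub_lie_mem {n : ℕ} {a a' : FreeLieAlgebra ℚ (Fin 2)}
    (ha : a - a' ∈ lcsF n) (u : FreeLieAlgebra ℚ (Fin 2)) (m : ℕ) :
    truncExpAd a u (m + 1) - truncExpAd a' u (m + 1) - ⁅a - a', u⁆ ∈ lcsF (n + 2) := by
  set f : ℕ → FreeLieAlgebra ℚ (Fin 2) := fun j => ((j.factorial : ℚ)⁻¹) •
    ((ad ℚ _ a ^ j) u - (ad ℚ _ a' ^ j) u)
  have hsum : truncExpAd a u (m + 1) - truncExpAd a' u (m + 1) =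
      ∑ j ∈ Finset.range m, f (j + 2) + ⁅a - a', u⁆ := by
    rw [truncExpAd, truncExpAd, ← Finset.sum_sub_distrib]
    simp_rw [← smul_sub]
    rw [Finset.sum_range_succ', Finset.sum_range_succ']
    simp [f, sub_lie]
  rw [hsum, add_sub_cancel_right]
  refine Submodule.sum_mem _ fun j _ => Submodule.smul_mem _ _ ?_
  exact antitone_lowerCentralSeries ℚ _ _ (by omega)
    (ad_pow_apply_sub_ad_pow_apply_mem ha u (j + 2))

/-- Elements of `L̂` are encoded as sequences `z : ℕ → L` that are coherent for the weight
filtration, and `exp(ad_z) = exp(ad_x) ∘ exp(ad_y)` is imposed on the dense subalgebra `L`, modulo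
each filtration stage, through the truncated exponentials. -/
theorem stmt4 (z z' : ℕ → FreeLieAlgebra ℚ (Fin 2))
    (hz : ∀ n, z (n + 1) - z n ∈ lcsF n)
    (hz' : ∀ n, z' (n + 1) - z' n ∈ lcsF n)
    (hzBCH : ∀ (u : FreeLieAlgebra ℚ (Fin 2)) (n : ℕ),
      truncExpAd (z n) u n
        - truncExpAd (FreeLieAlgebra.of ℚ (0 : Fin 2))
            (truncExpAd (FreeLieAlgebra.of ℚ (1 : Fin 2)) u n) n ∈ lcsF n)
    (hz'BCH : ∀ (u : FreeLieAlgebra ℚ (Fin 2)) (n : ℕ),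
      truncExpAd (z' n) u n
        - truncExpAd (FreeLieAlgebra.of ℚ (0 : Fin 2))
            (truncExpAd (FreeLieAlgebra.of ℚ (1 : Fin 2)) u n) n ∈ lcsF n) :
    ∀ n, z n - z' n ∈ lcsF n := by
  have hstep (n : ℕ) : z (n + 1) - z' (n + 1) - (z n - z' n) ∈ lcsF n := by
    rw [sub_sub_sub_comm]
    exact sub_mem (hz n) (hz' n)
  intro n
  induction n with
  | zero => exact LieSubmodule.mem_top _
  | succ n ih =>
    have hd : z (n + 1) - z' (n + 1) ∈ lcsF n := by
      simpa only [sub_add_cancel] using add_mem (hstep n) ih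
    have he : z (n + 2) - z' (n + 2) ∈ lcsF n := by
      have h := add_mem (antitone_lowerCentralSeries ℚ _ _ n.le_succ (hstep (n + 1))) hd
      rwa [sub_add_cancel] at h
    have he' : z (n + 2) - z' (n + 2) ∈ lcsF (n + 1) := by
      refine FreeLieAlgebra.mem_lowerCentralSeries_succ_of_forall_lie_of_mem he fun x => ?_
      have hexp := sub_mem (hzBCH (FreeLieAlgebra.of ℚ x) (n + 2))
        (hz'BCH (FreeLieAlgebra.of ℚ x) (n + 2))
      rw [sub_sub_sub_cancel_right] at hexp
      have h := sub_mem hexp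
        (truncExpAd_sub_truncExpAd_sub_lie_mem he (FreeLieAlgebra.of ℚ x) (n + 1))
      rwa [sub_sub_cancel] at h
    simpa only [sub_sub_cancel] using sub_mem he' (hstep (n + 1))
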